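/- For every y ∈ [−1/2, 0] the cubic equation μ³ − (4+2y)μ² − (4+8y)μ − 8y = 0 has a unique solution μ(y) ∈ [0,2], characterized by y = −2v₁² + 6v₁ − 5 + 1/v₁ with v₁ = 2/(2+μ(y)); moreover, every bivariate copula C with ψ(C) = y satisfies ξ(C) ≥ −4v₁² + 20v₁ − 17 + 2/v₁ − 1/v₁² − 12·ln(v₁), where v₁ = 2/(2+μ(y)). -/

import Mathlib

/-!
For fixed `v` the section `t ↦ C(t, v)` is 1-Lipschitz and takes the values `0`, `c = C(v, v)`
and `v` at `t = 0, v, 1`, so Cauchy–Schwarz on `[0, v]` and on `[v, 1]` gives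
`∫₀¹ (∂₁C(t, v))² dt ≥ c²/v + (v - c)²/(1 - v)`, where `max 0 (2v - 1) ≤ c ≤ v`.
Subtracting a Lagrange multiplier `2(1 - 1/b)c` for the footrule constraint `6 ∫ C(v, v) dv = ψ + 2`
and minimising pointwise in `c` leaves an explicit integrand in `v`; integrating it bounds `ξ(C)`
below by an explicit function of `ψ(C)` and `b`, for every `b ∈ [1/2, 1]`. The optimal `b` satisfies
`ψ = -2b² + 6b - 5 + 1/b`, which for `μ = 2/b - 2` is the cubic equation. On `[0, 2]` the cubic is
strictly decreasing and changes sign, so it has exactly one root there.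
-/

open MeasureTheory Set

noncomputable section

def IsCopula (C : ℝ → ℝ → ℝ) : Prop :=
  (∀ u ∈ Icc (0:ℝ) 1, ∀ v ∈ Icc (0:ℝ) 1, C u v ∈ Icc (0:ℝ) 1) ∧
  (∀ u ∈ Icc (0:ℝ) 1, C u 0 = 0 ∧ C u 1 = u) ∧
  (∀ v ∈ Icc (0:ℝ) 1, C 0 v = 0 ∧ C 1 v = v) ∧
  (∀ u₁ ∈ Icc (0:ℝ) 1, ∀ u₂ ∈ Icc (0:ℝ) 1, ∀ v₁ ∈ Icc (0:ℝ) 1, ∀ v₂ ∈ Icc (0:ℝ) 1,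
    u₁ ≤ u₂ → v₁ ≤ v₂ → 0 ≤ C u₂ v₂ - C u₁ v₂ - C u₂ v₁ + C u₁ v₁)

/-- The (a.e. defined) partial derivative of `C` with respect to its first argument. -/
def d1 (C : ℝ → ℝ → ℝ) (t v : ℝ) : ℝ := deriv (fun s => C s v) t

/-- Chatterjee's rank correlation. -/
def xi (C : ℝ → ℝ → ℝ) : ℝ :=
  6 * (∫ v in (0:ℝ)..1, ∫ t in (0:ℝ)..1, (d1 C t v) ^ 2) - 2

/-- Spearman's footrule. -/
def psi (C : ℝ → ℝ → ℝ) : ℝ :=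
  6 * (∫ v in (0:ℝ)..1, C v v) - 2

/-- Stochastically increasing: for each `v`, `t ↦ ∂₁C(t,v)` agrees a.e. on `[0,1]`
with a non-increasing function. -/
def IsSI (C : ℝ → ℝ → ℝ) : Prop :=
  ∀ v ∈ Icc (0:ℝ) 1, ∃ g : ℝ → ℝ, AntitoneOn g (Icc (0:ℝ) 1) ∧
    (∀ᵐ t ∂(volume.restrict (Icc (0:ℝ) 1)), d1 C t v = g t)

open Function
open scoped NNReal

theorem AbsolutelyContinuousOnInterval.sq_sub_div_le_integral_deriv_sq {f : ℝ → ℝ} {a b : ℝ}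
    (hf : AbsolutelyContinuousOnInterval f a b)
    (hf' : IntervalIntegrable (fun x => deriv f x ^ 2) volume a b) (hab : a < b) :
    (f b - f a) ^ 2 / (b - a) ≤ ∫ x in a..b, deriv f x ^ 2 := by
  set s := (f b - f a) / (b - a) with hs
  have hd := hf.intervalIntegrable_deriv
  have hexpand : ∫ x in a..b, (deriv f x - s) ^ 2
      = (∫ x in a..b, deriv f x ^ 2) - (f b - f a) ^ 2 / (b - a) := by
    have hsq : ∀ x, (deriv f x - s) ^ 2 = deriv f x ^ 2 - (2 * s * deriv f x - s ^ 2) :=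
      fun x => by ring
    simp_rw [hsq]
    rw [intervalIntegral.integral_sub hf' ((hd.const_mul _).sub intervalIntegrable_const),
      intervalIntegral.integral_sub (hd.const_mul _) intervalIntegrable_const,
      intervalIntegral.integral_const_mul, hf.integral_deriv_eq_sub,
      intervalIntegral.integral_const, smul_eq_mul, hs]
    field_simp [(sub_pos.2 hab).ne']
    ring
  have hnonneg : 0 ≤ ∫ x in a..b, (deriv f x - s) ^ 2 :=
    intervalIntegral.integral_nonneg hab.le fun x _ => sq_nonneg _
  linarith

theorem LipschitzWith.intervalIntegrable_deriv_sq {f : ℝ → ℝ} {K : ℝ≥0} (hf : LipschitzWith K f)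
    (a b : ℝ) : IntervalIntegrable (fun x => deriv f x ^ 2) volume a b :=
  (intervalIntegrable_const (c := (K : ℝ) ^ 2)).mono_fun'
    ((measurable_deriv f).pow_const 2).aestronglyMeasurable <| ae_of_all _ fun x => by
      dsimp only
      rw [norm_pow]
      exact pow_le_pow_left₀ (norm_nonneg _) (norm_deriv_le_of_lipschitz hf) 2

theorem LipschitzWith.sq_div_add_sq_div_le_integral_deriv_sq {f : ℝ → ℝ} {K : ℝ≥0}
    (hf : LipschitzWith K f) {a b c : ℝ} (hac : a < c) (hcb : c < b) :
    (f c - f a) ^ 2 / (c - a) + (f b - f c) ^ 2 / (b - c) ≤ ∫ x in a..b, deriv f x ^ 2 := by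
  rw [← intervalIntegral.integral_add_adjacent_intervals (hf.intervalIntegrable_deriv_sq a c)
    (hf.intervalIntegrable_deriv_sq c b)]
  exact add_le_add
    (hf.lipschitzOnWith.absolutelyContinuousOnInterval.sq_sub_div_le_integral_deriv_sq
      (hf.intervalIntegrable_deriv_sq a c) hac)
    (hf.lipschitzOnWith.absolutelyContinuousOnInterval.sq_sub_div_le_integral_deriv_sq
      (hf.intervalIntegrable_deriv_sq c b) hcb)

theorem intervalIntegrable_and_integral_eq_of_eqOn_Ioo {f g F : ℝ → ℝ} {a b : ℝ} (hab : a ≤ b)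
    (hF : ∀ x ∈ Icc a b, HasDerivAt F (g x) x) (hg : ContinuousOn g (Icc a b))
    (hfg : EqOn f g (Ioo a b)) :
    IntervalIntegrable f volume a b ∧ ∫ x in a..b, f x = F b - F a := by
  have hgi := hg.intervalIntegrable_of_Icc (μ := volume) hab
  have hfg' : EqOn g f (uIoo a b) := by
    rw [uIoo_of_le hab]
    exact hfg.symm
  refine ⟨hgi.congr_uIoo hfg', ?_⟩
  rw [← intervalIntegral.integral_congr_uIoo hfg']
  exact intervalIntegral.integral_eq_sub_of_hasDerivAt (by rwa [uIcc_of_le hab]) hgi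

/-- The arguments are swapped so that `measurable_deriv_with_param` applies to `(v, t) ↦ ∂₁C(t, v)`;
clamping makes a copula continuous on the whole plane, whatever its junk values outside the square. -/
def clampExt (C : ℝ → ℝ → ℝ) (v t : ℝ) : ℝ :=
  C (projIcc 0 1 zero_le_one t) (projIcc 0 1 zero_le_one v)

theorem clampExt_of_mem {C : ℝ → ℝ → ℝ} {u v : ℝ} (hu : u ∈ Icc (0:ℝ) 1) (hv : v ∈ Icc (0:ℝ) 1) :
    clampExt C v u = C u v := by
  simp [clampExt, projIcc_of_mem _ hu, projIcc_of_mem _ hv]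

theorem d1_eq_deriv_clampExt {C : ℝ → ℝ → ℝ} {t v : ℝ} (ht : t ∈ Ioo (0:ℝ) 1)
    (hv : v ∈ Icc (0:ℝ) 1) : d1 C t v = deriv (clampExt C v) t :=
  Filter.EventuallyEq.deriv_eq <| by
    filter_upwards [Ioo_mem_nhds ht.1 ht.2] with s hs
    exact (clampExt_of_mem (Ioo_subset_Icc_self hs) hv).symm

theorem integral_d1_sq_eq {C : ℝ → ℝ → ℝ} {v : ℝ} (hv : v ∈ Icc (0:ℝ) 1) :
    ∫ t in (0:ℝ)..1, d1 C t v ^ 2 = ∫ t in (0:ℝ)..1, deriv (clampExt C v) t ^ 2 :=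
  intervalIntegral.integral_congr_uIoo fun t ht => by
    rw [uIoo_of_le zero_le_one] at ht
    rw [d1_eq_deriv_clampExt ht hv]

namespace IsCopula

variable {C : ℝ → ℝ → ℝ}

theorem abs_sub_le_left (hC : IsCopula C) {u u' v : ℝ} (hu : u ∈ Icc (0:ℝ) 1)
    (hu' : u' ∈ Icc (0:ℝ) 1) (hv : v ∈ Icc (0:ℝ) 1) : |C u v - C u' v| ≤ |u - u'| := by
  wlog h : u' ≤ u generalizing u u'
  · rw [abs_sub_comm, abs_sub_comm u]
    exact this hu' hu (le_of_not_ge h)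
  have h₀ := hC.2.2.2 u' hu' u hu 0 ⟨le_rfl, zero_le_one⟩ v hv h hv.1
  have h₁ := hC.2.2.2 u' hu' u hu v hv 1 ⟨zero_le_one, le_rfl⟩ h hv.2
  rw [(hC.2.1 u hu).1, (hC.2.1 u' hu').1] at h₀
  rw [(hC.2.1 u hu).2, (hC.2.1 u' hu').2] at h₁
  rw [abs_of_nonneg (by linarith), abs_of_nonneg (sub_nonneg.2 h)]
  linarith

theorem abs_sub_le_right (hC : IsCopula C) {u v v' : ℝ} (hu : u ∈ Icc (0:ℝ) 1)
    (hv : v ∈ Icc (0:ℝ) 1) (hv' : v' ∈ Icc (0:ℝ) 1) : |C u v - C u v'| ≤ |v - v'| := by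
  wlog h : v' ≤ v generalizing v v'
  · rw [abs_sub_comm, abs_sub_comm v]
    exact this hv' hv (le_of_not_ge h)
  have h₀ := hC.2.2.2 0 ⟨le_rfl, zero_le_one⟩ u hu v' hv' v hv hu.1 h
  have h₁ := hC.2.2.2 u hu 1 ⟨zero_le_one, le_rfl⟩ v' hv' v hv hu.2 h
  rw [(hC.2.2.1 v hv).1, (hC.2.2.1 v' hv').1] at h₀
  rw [(hC.2.2.1 v hv).2, (hC.2.2.1 v' hv').2] at h₁
  rw [abs_of_nonneg (by linarith), abs_of_nonneg (sub_nonneg.2 h)]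
  linarith

theorem abs_sub_le (hC : IsCopula C) {u u' v v' : ℝ} (hu : u ∈ Icc (0:ℝ) 1)
    (hu' : u' ∈ Icc (0:ℝ) 1) (hv : v ∈ Icc (0:ℝ) 1) (hv' : v' ∈ Icc (0:ℝ) 1) :
    |C u v - C u' v'| ≤ |u - u'| + |v - v'| :=
  (_root_.abs_sub_le _ (C u' v) _).trans
    (add_le_add (hC.abs_sub_le_left hu hu' hv) (hC.abs_sub_le_right hu' hv hv'))

theorem diag_mem_Icc (hC : IsCopula C) {v : ℝ} (hv : v ∈ Icc (0:ℝ) 1) :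
    C v v ∈ Icc (max 0 (2 * v - 1)) v := by
  have hupper := hC.abs_sub_le_left hv ⟨le_rfl, zero_le_one⟩ hv
  have hlower := hC.abs_sub_le_right hv hv ⟨zero_le_one, le_rfl⟩
  rw [(hC.2.2.1 v hv).1, sub_zero, sub_zero, abs_of_nonneg hv.1, abs_le] at hupper
  rw [(hC.2.1 v hv).2, abs_sub_comm v, abs_of_nonneg (sub_nonneg.2 hv.2), abs_le] at hlower
  exact ⟨max_le (hC.1 v hv v hv).1 (by linarith), by linarith⟩

theorem abs_clampExt_sub_le (hC : IsCopula C) (v v' t t' : ℝ) :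
    |clampExt C v t - clampExt C v' t'| ≤ |t - t'| + |v - v'| :=
  (hC.abs_sub_le (Subtype.prop _) (Subtype.prop _) (Subtype.prop _) (Subtype.prop _)).trans
    (add_le_add (abs_projIcc_sub_projIcc _) (abs_projIcc_sub_projIcc _))

theorem lipschitzWith_clampExt (hC : IsCopula C) (v : ℝ) : LipschitzWith 1 (clampExt C v) :=
  LipschitzWith.of_dist_le_mul fun t t' => by
    simpa [Real.dist_eq] using hC.abs_clampExt_sub_le v v t t'

theorem continuous_uncurry_clampExt (hC : IsCopula C) : Continuous (uncurry (clampExt C)) := by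
  refine (LipschitzWith.of_dist_le_mul (K := 2) fun ⟨v, t⟩ ⟨v', t'⟩ => ?_).continuous
  have h := hC.abs_clampExt_sub_le v v' t t'
  simp only [uncurry_apply_pair, Prod.dist_eq, Real.dist_eq, NNReal.coe_ofNat]
  linarith [le_max_left |v - v'| |t - t'|, le_max_right |v - v'| |t - t'|]

theorem sq_div_add_sq_div_le_integral_d1_sq (hC : IsCopula C) {v : ℝ} (hv : v ∈ Ioo (0:ℝ) 1) :
    C v v ^ 2 / v + (v - C v v) ^ 2 / (1 - v) ≤ ∫ t in (0:ℝ)..1, d1 C t v ^ 2 := by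
  have hv' := Ioo_subset_Icc_self hv
  have h := (hC.lipschitzWith_clampExt v).sq_div_add_sq_div_le_integral_deriv_sq hv.1 hv.2
  rwa [clampExt_of_mem hv' hv', clampExt_of_mem ⟨le_rfl, zero_le_one⟩ hv',
    clampExt_of_mem ⟨zero_le_one, le_rfl⟩ hv', (hC.2.2.1 v hv').1, (hC.2.2.1 v hv').2,
    sub_zero, sub_zero, ← integral_d1_sq_eq hv'] at h

theorem intervalIntegrable_integral_d1_sq (hC : IsCopula C) :
    IntervalIntegrable (fun v => ∫ t in (0:ℝ)..1, d1 C t v ^ 2) volume 0 1 := by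
  have hmeas : StronglyMeasurable fun v => ∫ t in (0:ℝ)..1, deriv (clampExt C v) t ^ 2 := by
    simp_rw [intervalIntegral.integral_of_le zero_le_one]
    exact ((measurable_deriv_with_param hC.continuous_uncurry_clampExt).pow_const 2
      ).stronglyMeasurable.integral_prod_right'
  have hbound (v : ℝ) : ‖∫ t in (0:ℝ)..1, deriv (clampExt C v) t ^ 2‖ ≤ 1 := by
    have hderiv (t : ℝ) : ‖deriv (clampExt C v) t ^ 2‖ ≤ 1 := by
      rw [norm_pow]
      exact pow_le_one₀ (norm_nonneg _) (by
        simpa using norm_deriv_le_of_lipschitz (hC.lipschitzWith_clampExt v))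
    simpa using intervalIntegral.norm_integral_le_of_norm_le_const (a := 0) (b := 1)
      fun t _ => hderiv t
  refine (intervalIntegrable_const.mono_fun' hmeas.aestronglyMeasurable
    (ae_of_all _ hbound)).congr_uIoo fun v hv => ?_
  rw [uIoo_of_le zero_le_one] at hv
  exact (integral_d1_sq_eq (Ioo_subset_Icc_self hv)).symm

theorem intervalIntegrable_diag (hC : IsCopula C) :
    IntervalIntegrable (fun v => C v v) volume 0 1 := by
  refine ((hC.continuous_uncurry_clampExt.comp (continuous_id.prodMk continuous_id)
    ).intervalIntegrable 0 1).congr_uIoo fun v hv => ?_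
  rw [uIoo_of_le zero_le_one] at hv
  exact clampExt_of_mem (Ioo_subset_Icc_self hv) (Ioo_subset_Icc_self hv)

end IsCopula

/-- For `0 < v < 1` this is the minimum of `c ↦ c²/v + (v - c)²/(1 - v) - 2(1 - 1/b)c` over
`max 0 (2v - 1) ≤ c ≤ v`: the unconstrained minimiser `c = v - v(1 - v)/b` is feasible exactly
when `1 - b ≤ v ≤ b`, and otherwise the minimum sits at `c = 0` or at `c = 2v - 1`. -/
def dualIntegrand (b v : ℝ) : ℝ :=
  if v ≤ 1 - b then v ^ 2 / (1 - v)
  else if v ≤ b then (v / b) ^ 2 - (1 - 1 / b) ^ 2 * v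
  else 3 * v - 3 + 1 / v - 2 * (1 - 1 / b) * (2 * v - 1)

theorem dualIntegrand_le {b v c : ℝ} (hb : 0 < b) (hv : v ∈ Ioo (0:ℝ) 1)
    (hc : c ∈ Icc (max 0 (2 * v - 1)) v) :
    2 * (1 - 1 / b) * c + dualIntegrand b v ≤ c ^ 2 / v + (v - c) ^ 2 / (1 - v) := by
  obtain ⟨hv₀, hv₁⟩ := hv
  obtain ⟨hc₀, hcv⟩ := hc
  rw [max_le_iff] at hc₀
  have h1v : 0 < 1 - v := by linarith
  rw [← sub_nonneg, dualIntegrand]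
  split_ifs with hlow hmid
  · have key : c ^ 2 / v + (v - c) ^ 2 / (1 - v) - (2 * (1 - 1 / b) * c + v ^ 2 / (1 - v))
        = c * (b * c + 2 * v * (1 - b - v)) / (v * (1 - v) * b) := by
      field_simp; ring
    rw [key]
    exact div_nonneg (mul_nonneg hc₀.1 (by nlinarith)) (by positivity)
  · have key : c ^ 2 / v + (v - c) ^ 2 / (1 - v)
          - (2 * (1 - 1 / b) * c + ((v / b) ^ 2 - (1 - 1 / b) ^ 2 * v))
        = (b * c - b * v ^ 2 - (b - 1) * v * (1 - v)) ^ 2 / (v * (1 - v) * b ^ 2) := by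
      field_simp; ring
    rw [key]
    positivity
  · have key : c ^ 2 / v + (v - c) ^ 2 / (1 - v)
          - (2 * (1 - 1 / b) * c + (3 * v - 3 + 1 / v - 2 * (1 - 1 / b) * (2 * v - 1)))
        = (c - (2 * v - 1)) * (b * (c - (2 * v - 1)) + 2 * (1 - v) * (v - b))
          / (v * (1 - v) * b) := by
      field_simp; ring
    rw [key]
    have : 0 ≤ c - (2 * v - 1) := by linarith
    exact div_nonneg (mul_nonneg this (by nlinarith)) (by positivity)

section dualIntegrand

variable {b : ℝ}

theorem dualIntegrand_low (hb : b ∈ Icc (1 / 2 : ℝ) 1) :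
    IntervalIntegrable (dualIntegrand b) volume 0 (1 - b) ∧
      ∫ v in (0:ℝ)..(1 - b), dualIntegrand b v = -b ^ 2 / 2 + 2 * b - 3 / 2 - Real.log b := by
  obtain ⟨hb₁, hb₂⟩ := hb
  have hF : ∀ v ∈ Icc 0 (1 - b), HasDerivAt (fun v => -v ^ 2 / 2 - v - Real.log (1 - v))
      (v ^ 2 / (1 - v)) v := by
    intro v hv
    have h1v : 1 - v ≠ 0 := by linarith [hv.2]
    refine ((((hasDerivAt_pow 2 v).neg.div_const 2).sub (hasDerivAt_id v)).sub
      (((hasDerivAt_id v).const_sub 1).log h1v)).congr_deriv ?_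
    simp only [id, Nat.cast_ofNat]
    field_simp
    ring
  obtain ⟨hi, he⟩ := intervalIntegrable_and_integral_eq_of_eqOn_Ioo (f := dualIntegrand b)
    (by linarith) hF (continuousOn_id.pow 2 |>.div (continuousOn_const.sub continuousOn_id)
      fun v hv => by linarith [hv.2])
    fun v hv => if_pos hv.2.le
  refine ⟨hi, he.trans ?_⟩
  simp only [sub_sub_cancel, sub_zero, Real.log_one]
  ring

theorem dualIntegrand_mid (hb : b ∈ Icc (1 / 2 : ℝ) 1) :
    IntervalIntegrable (dualIntegrand b) volume (1 - b) b ∧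
      ∫ v in (1 - b)..b, dualIntegrand b v = -b / 3 + 3 / 2 - 1 / b + 1 / (6 * b ^ 2) := by
  obtain ⟨hb₁, hb₂⟩ := hb
  have hF : ∀ v ∈ Icc (1 - b) b,
      HasDerivAt (fun v => v ^ 3 / (3 * b ^ 2) - (1 - 1 / b) ^ 2 * v ^ 2 / 2)
        ((v / b) ^ 2 - (1 - 1 / b) ^ 2 * v) v := by
    intro v _
    refine (((hasDerivAt_pow 3 v).div_const _).sub
      (((hasDerivAt_pow 2 v).const_mul ((1 - 1 / b) ^ 2)).div_const 2)).congr_deriv ?_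
    simp only [Nat.cast_ofNat]
    field_simp
    ring
  obtain ⟨hi, he⟩ := intervalIntegrable_and_integral_eq_of_eqOn_Ioo (f := dualIntegrand b)
    (by linarith) hF (by fun_prop) fun v hv => by
      simp only [dualIntegrand, if_neg (not_le.2 hv.1), if_pos hv.2.le]
  refine ⟨hi, he.trans ?_⟩
  field_simp
  ring

theorem dualIntegrand_high (hb : b ∈ Icc (1 / 2 : ℝ) 1) :
    IntervalIntegrable (dualIntegrand b) volume b 1 ∧
      ∫ v in b..1, dualIntegrand b v = b ^ 2 / 2 - b + 1 / 2 - Real.log b := by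
  obtain ⟨hb₁, hb₂⟩ := hb
  have hF : ∀ v ∈ Icc b 1,
      HasDerivAt (fun v => 3 * v ^ 2 / 2 - 3 * v + Real.log v - 2 * (1 - 1 / b) * (v ^ 2 - v))
        (3 * v - 3 + 1 / v - 2 * (1 - 1 / b) * (2 * v - 1)) v := by
    intro v hv
    have hv₀ : v ≠ 0 := by linarith [hv.1]
    refine (((((hasDerivAt_pow 2 v).const_mul 3).div_const 2).sub
      ((hasDerivAt_id v).const_mul 3)).add (Real.hasDerivAt_log hv₀) |>.sub
      (((hasDerivAt_pow 2 v).sub (hasDerivAt_id v)).const_mul (2 * (1 - 1 / b)))).congr_deriv ?_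
    simp only [Nat.cast_ofNat]
    field_simp
    ring
  obtain ⟨hi, he⟩ := intervalIntegrable_and_integral_eq_of_eqOn_Ioo (f := dualIntegrand b) hb₂
    hF (ContinuousOn.sub (ContinuousOn.add (by fun_prop)
      (continuousOn_const.div continuousOn_id fun v hv => by linarith [hv.1])) (by fun_prop))
    fun v hv => by
      simp only [dualIntegrand, if_neg (not_le.2 (by linarith [hv.1] : 1 - b < v)),
        if_neg (not_le.2 hv.1)]
  refine ⟨hi, he.trans ?_⟩
  rw [Real.log_one]
  field_simp
  ring

theorem intervalIntegrable_dualIntegrand (hb : b ∈ Icc (1 / 2 : ℝ) 1) :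
    IntervalIntegrable (dualIntegrand b) volume 0 1 := by
  simpa using ((dualIntegrand_low hb).1.trans (dualIntegrand_mid hb).1).trans
    (dualIntegrand_high hb).1

theorem integral_dualIntegrand (hb : b ∈ Icc (1 / 2 : ℝ) 1) :
    ∫ v in (0:ℝ)..1, dualIntegrand b v = 2 * b / 3 + 1 / 2 - 1 / b + 1 / (6 * b ^ 2)
      - 2 * Real.log b := by
  obtain ⟨hi₁, he₁⟩ := dualIntegrand_low hb
  obtain ⟨hi₂, he₂⟩ := dualIntegrand_mid hb
  obtain ⟨hi₃, he₃⟩ := dualIntegrand_high hb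
  rw [← intervalIntegral.integral_add_adjacent_intervals (hi₁.trans hi₂) hi₃,
    ← intervalIntegral.integral_add_adjacent_intervals hi₁ hi₂, he₁, he₂, he₃]
  ring

end dualIntegrand

theorem IsCopula.le_xi {C : ℝ → ℝ → ℝ} (hC : IsCopula C) {b : ℝ} (hb : b ∈ Icc (1 / 2 : ℝ) 1) :
    2 * (1 - 1 / b) * (psi C + 2) + 4 * b + 1 - 6 / b + 1 / b ^ 2 - 12 * Real.log b ≤ xi C := by
  have hb₀ : 0 < b := by linarith [hb.1]
  have hpointwise : ∀ᵐ v ∂volume.restrict (Icc (0:ℝ) 1),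
      2 * (1 - 1 / b) * C v v + dualIntegrand b v ≤ ∫ t in (0:ℝ)..1, d1 C t v ^ 2 := by
    rw [Measure.restrict_congr_set Ioo_ae_eq_Icc.symm]
    filter_upwards [ae_restrict_mem measurableSet_Ioo] with v hv
    exact (dualIntegrand_le hb₀ hv (hC.diag_mem_Icc (Ioo_subset_Icc_self hv))).trans
      (hC.sq_div_add_sq_div_le_integral_d1_sq hv)
  have hint := intervalIntegral.integral_mono_ae_restrict zero_le_one
    ((hC.intervalIntegrable_diag.const_mul _).add (intervalIntegrable_dualIntegrand hb))
    hC.intervalIntegrable_integral_d1_sq hpointwise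
  rw [intervalIntegral.integral_add (hC.intervalIntegrable_diag.const_mul _)
    (intervalIntegrable_dualIntegrand hb), intervalIntegral.integral_const_mul,
    integral_dualIntegrand hb] at hint
  rw [xi, psi]
  linear_combination 6 * hint

def footruleCubic (y μ : ℝ) : ℝ := μ ^ 3 - (4 + 2 * y) * μ ^ 2 - (4 + 8 * y) * μ - 8 * y

section footruleCubic

variable {y : ℝ}

theorem strictAntiOn_footruleCubic (hy : y ∈ Icc (-(1 / 2) : ℝ) 0) :
    StrictAntiOn (footruleCubic y) (Icc 0 2) := by
  refine strictAntiOn_of_deriv_neg (convex_Icc 0 2) (by unfold footruleCubic; fun_prop)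
    fun μ hμ => ?_
  rw [interior_Icc] at hμ
  have hderiv : HasDerivAt (footruleCubic y) (3 * μ ^ 2 - 2 * (4 + 2 * y) * μ - (4 + 8 * y)) μ :=
    ((((hasDerivAt_pow 3 μ).sub ((hasDerivAt_pow 2 μ).const_mul (4 + 2 * y))).sub
      ((hasDerivAt_id μ).const_mul (4 + 8 * y))).sub_const (8 * y)).congr_deriv (by
        simp only [Nat.cast_ofNat]; ring)
  rw [hderiv.deriv]
  nlinarith [mul_pos hμ.1 (sub_pos.2 hμ.2), hy.1, hy.2]

theorem existsUnique_footruleCubic_eq_zero (hy : y ∈ Icc (-(1 / 2) : ℝ) 0) :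
    ∃! μ, μ ∈ Icc (0:ℝ) 2 ∧ footruleCubic y μ = 0 := by
  have hsign : (0:ℝ) ∈ Icc (footruleCubic y 2) (footruleCubic y 0) := by
    simp only [footruleCubic, mem_Icc]
    constructor <;> nlinarith [hy.1, hy.2]
  obtain ⟨μ, hμ, hroot⟩ := intermediate_value_Icc' zero_le_two
    (by unfold footruleCubic; fun_prop) hsign
  exact ⟨μ, ⟨hμ, hroot⟩, fun μ' h => (strictAntiOn_footruleCubic hy).injOn h.1 hμ
    (h.2.trans hroot.symm)⟩

theorem eq_of_footruleCubic_eq_zero {μ : ℝ} (hμ : 2 + μ ≠ 0) (h : footruleCubic y μ = 0) :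
    y = -2 * (2 / (2 + μ)) ^ 2 + 6 * (2 / (2 + μ)) - 5 + 1 / (2 / (2 + μ)) := by
  have key : -2 * (2 / (2 + μ)) ^ 2 + 6 * (2 / (2 + μ)) - 5 + 1 / (2 / (2 + μ)) - y
      = footruleCubic y μ / (2 * (2 + μ) ^ 2) := by
    unfold footruleCubic
    field_simp
    ring
  rw [h, zero_div, sub_eq_zero] at key
  exact key.symm

end footruleCubic

/-- For `y ∈ [−1/2, 0]`, the cubic `μ³ − (4+2y)μ² − (4+8y)μ − 8y = 0` has a
unique solution `μ(y) ∈ [0,2]`, characterized by `y = −2v₁² + 6v₁ − 5 + 1/v₁` with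
`v₁ = 2/(2+μ(y))`; and every copula `C` with `ψ(C) = y` satisfies
`ξ(C) ≥ −4v₁² + 20v₁ − 17 + 2/v₁ − 1/v₁² − 12·ln v₁`. -/
theorem lower_bound_via_cubic (y : ℝ) (hy : y ∈ Icc (-(1/2) : ℝ) 0) :
    (∃! μ : ℝ, μ ∈ Icc (0:ℝ) 2 ∧
      μ ^ 3 - (4 + 2 * y) * μ ^ 2 - (4 + 8 * y) * μ - 8 * y = 0) ∧
    (∀ μ ∈ Icc (0:ℝ) 2,
      μ ^ 3 - (4 + 2 * y) * μ ^ 2 - (4 + 8 * y) * μ - 8 * y = 0 →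
        (y = -2 * (2 / (2 + μ)) ^ 2 + 6 * (2 / (2 + μ)) - 5 + 1 / (2 / (2 + μ))) ∧
        ∀ C : ℝ → ℝ → ℝ, IsCopula C → psi C = y →
          xi C ≥ -4 * (2 / (2 + μ)) ^ 2 + 20 * (2 / (2 + μ)) - 17 + 2 / (2 / (2 + μ))
            - 1 / (2 / (2 + μ)) ^ 2 - 12 * Real.log (2 / (2 + μ))) := by
  refine ⟨existsUnique_footruleCubic_eq_zero hy, fun μ hμ hroot => ?_⟩
  have h2μ : 0 < 2 + μ := by linarith [hμ.1]
  have hchar := eq_of_footruleCubic_eq_zero h2μ.ne' hroot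
  refine ⟨hchar, fun C hC hpsi => ?_⟩
  set b := 2 / (2 + μ)
  have hb : b ∈ Icc (1 / 2 : ℝ) 1 :=
    ⟨by rw [le_div_iff₀ h2μ]; linarith [hμ.2], by rw [div_le_one h2μ]; linarith [hμ.1]⟩
  have hb₀ : b ≠ 0 := by linarith [hb.1]
  refine le_trans (le_of_eq ?_) (hC.le_xi hb)
  rw [hpsi, hchar]
  field_simp
  ring
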